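/- arXiv:2405.16547 — 2 statements merged into one kernel-verified Lean document; each statement's English description precedes it below -/
import Mathlib

section
/- Suppose the treatment matrix A is exchangeable (Assumption 1) and A is independent of Y(0). Then under the sharp null hypothesis H₀: Y_{ij}(0) = Y_{ij}(1) for all (i,j), the permutation test controls size conditionally: P[P(A,W) ≤ α | A ∈ S_a, W] ≤ α for every α ∈ [0,1] and every a in the support of A, where the probability is taken with respect to the conditional distribution of A given A ∈ S_a and W. -/
open MeasureTheory ProbabilityTheory Finset
open scoped ENNReal

/-- The action of a permutation `g` on an `n × n` array: `(gA)_{ij} = A_{g(i)g(j)}`. -/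
def permMat {n : ℕ} (g : Equiv.Perm (Fin n)) (M : Fin n → Fin n → ℝ) :
    Fin n → Fin n → ℝ := fun i j => M (g i) (g j)

/-- The permutation p-value `P(a,w) = (1/n!) Σ_{g∈G} 1{T(ga, w) ≥ T(a,w)}`. -/
noncomputable def permPValue {n : ℕ}
    (T : (Fin n → Fin n → ℝ) → ((Fin n → Fin n → ℝ) × (Fin n → Fin n → ℝ)) → ℝ)
    (a : Fin n → Fin n → ℝ) (w : (Fin n → Fin n → ℝ) × (Fin n → Fin n → ℝ)) : ℝ :=
  (1 / (Nat.factorial n : ℝ)) *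
    ∑ g : Equiv.Perm (Fin n), if T a w ≤ T (permMat g a) w then (1 : ℝ) else 0

lemma permMat_permMat {n : ℕ} (g h : Equiv.Perm (Fin n)) (M : Fin n → Fin n → ℝ) :
    permMat g (permMat h M) = permMat (h * g) M := rfl

lemma permMat_one {n : ℕ} (M : Fin n → Fin n → ℝ) : permMat 1 M = M := rfl

open scoped Classical in
lemma pval_orbit_formula {n : ℕ}
    (T : (Fin n → Fin n → ℝ) → ((Fin n → Fin n → ℝ) × (Fin n → Fin n → ℝ)) → ℝ)
    (a : Fin n → Fin n → ℝ) (w : (Fin n → Fin n → ℝ) × (Fin n → Fin n → ℝ))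
    (h : Equiv.Perm (Fin n)) :
    permPValue T (permMat h a) w =
      ((Finset.univ.filter fun g : Equiv.Perm (Fin n) =>
          T (permMat h a) w ≤ T (permMat g a) w).card : ℝ) / (Nat.factorial n : ℝ) := by
  unfold permPValue
  have h1 : ∀ g : Equiv.Perm (Fin n), permMat g (permMat h a) = permMat (h * g) a :=
    fun g => rfl
  calc (1 / (Nat.factorial n : ℝ)) *
        ∑ g : Equiv.Perm (Fin n), (if T (permMat h a) w ≤ T (permMat g (permMat h a)) w
          then (1 : ℝ) else 0)
      = (1 / (Nat.factorial n : ℝ)) *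
        ∑ g : Equiv.Perm (Fin n), (if T (permMat h a) w ≤ T (permMat (h * g) a) w
          then (1 : ℝ) else 0) := by
        simp only [h1]
    _ = (1 / (Nat.factorial n : ℝ)) *
        ∑ g : Equiv.Perm (Fin n), (if T (permMat h a) w ≤ T (permMat g a) w
          then (1 : ℝ) else 0) := by
        congr 1
        exact Equiv.sum_comp (Equiv.mulLeft h)
          (fun g => if T (permMat h a) w ≤ T (permMat g a) w then (1 : ℝ) else 0)
    _ = ((Finset.univ.filter fun g : Equiv.Perm (Fin n) =>
          T (permMat h a) w ≤ T (permMat g a) w).card : ℝ) / (Nat.factorial n : ℝ) := by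
        rw [Finset.sum_boole, one_div, inv_mul_eq_div]

open scoped Classical in
lemma claim1 {n : ℕ}
    (T : (Fin n → Fin n → ℝ) → ((Fin n → Fin n → ℝ) × (Fin n → Fin n → ℝ)) → ℝ)
    (a : Fin n → Fin n → ℝ) (w : (Fin n → Fin n → ℝ) × (Fin n → Fin n → ℝ))
    (α : ℝ) (hα0 : 0 ≤ α) :
    (((Finset.univ : Finset (Equiv.Perm (Fin n))).filter
        fun h => permPValue T (permMat h a) w ≤ α).card : ℝ) ≤ α * (Nat.factorial n : ℝ) := by
  set D := (Finset.univ : Finset (Equiv.Perm (Fin n))).filter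
      fun h => permPValue T (permMat h a) w ≤ α with hD
  rcases D.eq_empty_or_nonempty with hne | hne
  · rw [hne]
    simp only [Finset.card_empty, Nat.cast_zero]
    positivity
  · obtain ⟨h₀, h₀D, hmin⟩ := D.exists_min_image (fun h => T (permMat h a) w) hne
    have hsub : D ⊆ Finset.univ.filter
        (fun g => T (permMat h₀ a) w ≤ T (permMat g a) w) := by
      intro h hh
      exact Finset.mem_filter.mpr ⟨Finset.mem_univ _, hmin h hh⟩
    have hcard := Finset.card_le_card hsub
    have h₀mem : permPValue T (permMat h₀ a) w ≤ α := (Finset.mem_filter.mp h₀D).2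
    rw [pval_orbit_formula] at h₀mem
    have hfact : (0 : ℝ) < (Nat.factorial n : ℝ) := by
      exact_mod_cast Nat.factorial_pos n
    rw [div_le_iff₀ hfact] at h₀mem
    refine le_trans ?_ h₀mem
    exact_mod_cast hcard

open scoped Classical in
lemma counting_main {n : ℕ}
    (T : (Fin n → Fin n → ℝ) → ((Fin n → Fin n → ℝ) × (Fin n → Fin n → ℝ)) → ℝ)
    (a : Fin n → Fin n → ℝ) (w : (Fin n → Fin n → ℝ) × (Fin n → Fin n → ℝ))
    (α : ℝ) (hα0 : 0 ≤ α) :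
    (((Finset.univ.image fun g : Equiv.Perm (Fin n) => permMat g a).filter
        fun b => permPValue T b w ≤ α).card : ℝ)
      ≤ α * ((Finset.univ.image fun g : Equiv.Perm (Fin n) => permMat g a).card : ℝ) := by
  set S := Finset.univ.image fun g : Equiv.Perm (Fin n) => permMat g a with hS
  set P := fun b => permPValue T b w ≤ α with hP
  set m := ((Finset.univ : Finset (Equiv.Perm (Fin n))).filter
      fun h => permMat h a = a).card with hm
  -- each fiber has cardinality m
  have hfiber : ∀ b ∈ S,
      ((Finset.univ : Finset (Equiv.Perm (Fin n))).filter
        fun h => permMat h a = b).card = m := by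
    intro b hb
    obtain ⟨g₀, -, rfl⟩ := Finset.mem_image.mp hb
    rw [hm]
    apply Finset.card_bij' (fun h _ => h * g₀⁻¹) (fun k _ => k * g₀)
    · intro h hh
      have hh' := (Finset.mem_filter.mp hh).2
      refine Finset.mem_filter.mpr ⟨Finset.mem_univ _, ?_⟩
      have : permMat (h * g₀⁻¹) a = permMat g₀⁻¹ (permMat h a) := rfl
      rw [this, hh']
      have : permMat g₀⁻¹ (permMat g₀ a) = permMat (g₀ * g₀⁻¹) a := rfl
      rw [this, mul_inv_cancel, permMat_one]
    · intro k hk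
      have hk' := (Finset.mem_filter.mp hk).2
      refine Finset.mem_filter.mpr ⟨Finset.mem_univ _, ?_⟩
      have : permMat (k * g₀) a = permMat g₀ (permMat k a) := rfl
      rw [this, hk']
    · intro h _; group
    · intro k _; group
  -- total count
  have huniv : (Nat.factorial n) = S.card * m := by
    have h1 : (Finset.univ : Finset (Equiv.Perm (Fin n))).card =
        ∑ b ∈ S, ((Finset.univ : Finset (Equiv.Perm (Fin n))).filter
          fun h => permMat h a = b).card :=
      Finset.card_eq_sum_card_fiberwise fun h _ => Finset.mem_image_of_mem _ (Finset.mem_univ h)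
    rw [Finset.sum_congr rfl hfiber, Finset.sum_const, smul_eq_mul] at h1
    rw [← h1, Finset.card_univ, Fintype.card_perm, Fintype.card_fin]
  -- D count
  have hD : ((Finset.univ : Finset (Equiv.Perm (Fin n))).filter
      fun h => P (permMat h a)).card = (S.filter P).card * m := by
    have h1 : ((Finset.univ : Finset (Equiv.Perm (Fin n))).filter
        fun h => P (permMat h a)).card =
        ∑ b ∈ S.filter P, (((Finset.univ : Finset (Equiv.Perm (Fin n))).filter
          fun h => P (permMat h a)).filter fun h => permMat h a = b).card := by
      apply Finset.card_eq_sum_card_fiberwise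
      intro h hh
      exact Finset.mem_filter.mpr ⟨Finset.mem_image_of_mem _ (Finset.mem_univ h),
        (Finset.mem_filter.mp hh).2⟩
    rw [h1]
    have h2 : ∀ b ∈ S.filter P,
        (((Finset.univ : Finset (Equiv.Perm (Fin n))).filter
          fun h => P (permMat h a)).filter fun h => permMat h a = b).card = m := by
      intro b hb
      have hPb := (Finset.mem_filter.mp hb).2
      have : (((Finset.univ : Finset (Equiv.Perm (Fin n))).filter
          fun h => P (permMat h a)).filter fun h => permMat h a = b) =
          ((Finset.univ : Finset (Equiv.Perm (Fin n))).filter fun h => permMat h a = b) := by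
        ext h
        simp only [Finset.mem_filter, Finset.mem_univ, true_and]
        constructor
        · rintro ⟨-, h2⟩; exact h2
        · intro h2; exact ⟨by rw [h2]; exact hPb, h2⟩
      rw [this]
      exact hfiber b (Finset.mem_filter.mp hb).1
    rw [Finset.sum_congr rfl h2, Finset.sum_const, smul_eq_mul]
  -- m positive
  have hmpos : 0 < m := by
    rw [hm]
    apply Finset.card_pos.mpr
    exact ⟨1, Finset.mem_filter.mpr ⟨Finset.mem_univ _, permMat_one a⟩⟩
  -- combine with claim1
  have hc1 := claim1 T a w α hα0
  rw [show ((Finset.univ : Finset (Equiv.Perm (Fin n))).filter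
      fun h => permPValue T (permMat h a) w ≤ α) =
      ((Finset.univ : Finset (Equiv.Perm (Fin n))).filter
      fun h => P (permMat h a)) from rfl] at hc1
  rw [hD] at hc1
  have hfact : ((S.filter P).card * m : ℝ) ≤ α * (S.card * m : ℝ) := by
    push_cast at hc1 ⊢
    calc ((S.filter P).card : ℝ) * m ≤ α * (Nat.factorial n : ℝ) := hc1
      _ = α * (S.card * m : ℝ) := by rw [huniv]; push_cast; ring
  have hmpos' : (0 : ℝ) < m := by exact_mod_cast hmpos
  have := (mul_le_mul_iff_of_pos_right hmpos').mp (by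
    calc ((S.filter P).card : ℝ) * m ≤ α * ((S.card : ℝ) * m) := by
          push_cast at hfact ⊢; linarith [hfact]
      _ = (α * S.card) * m := by ring)
  exact this

open scoped Classical in
lemma orbit_measure_bound {n : ℕ}
    (T : (Fin n → Fin n → ℝ) → ((Fin n → Fin n → ℝ) × (Fin n → Fin n → ℝ)) → ℝ)
    (a : Fin n → Fin n → ℝ) (w : (Fin n → Fin n → ℝ) × (Fin n → Fin n → ℝ))
    (α : ℝ) (hα0 : 0 ≤ α)
    (νA : Measure (Fin n → Fin n → ℝ))
    (heq : ∀ g : Equiv.Perm (Fin n), νA {permMat g a} = νA {a}) :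
    νA {x | (∃ g : Equiv.Perm (Fin n), x = permMat g a) ∧ permPValue T x w ≤ α}
      ≤ ENNReal.ofReal α * νA {x | ∃ g : Equiv.Perm (Fin n), x = permMat g a} := by
  set S := Finset.univ.image fun g : Equiv.Perm (Fin n) => permMat g a with hSdef
  have hfin : ∀ F : Finset (Fin n → Fin n → ℝ), F ⊆ S →
      νA ↑F = F.card * νA {a} := by
    intro F hF
    have h1 : (↑F : Set (Fin n → Fin n → ℝ)) = ⋃ b ∈ F, {b} := by
      ext x; simp
    rw [h1, measure_biUnion_finset ?_ (fun b _ => measurableSet_singleton b)]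
    · have h2 : ∀ b ∈ F, νA {b} = νA {a} := by
        intro b hb
        obtain ⟨g, -, rfl⟩ := Finset.mem_image.mp (hF hb)
        exact heq g
      rw [Finset.sum_congr rfl h2, Finset.sum_const, nsmul_eq_mul]
    · intro b _ c _ hbc
      simp [Set.disjoint_singleton, hbc]
  have hset1 : {x | ∃ g : Equiv.Perm (Fin n), x = permMat g a} = (↑S : Set _) := by
    ext x
    simp only [hSdef, Set.mem_setOf_eq, Finset.coe_image, Finset.coe_univ, Set.image_univ,
      Set.mem_range]
    exact ⟨fun ⟨g, hg⟩ => ⟨g, hg.symm⟩, fun ⟨g, hg⟩ => ⟨g, hg.symm⟩⟩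
  have hset2 : {x | (∃ g : Equiv.Perm (Fin n), x = permMat g a) ∧ permPValue T x w ≤ α}
      = (↑(S.filter fun b => permPValue T b w ≤ α) : Set _) := by
    ext x
    simp only [Set.mem_setOf_eq, Finset.coe_filter, hSdef, Finset.mem_image, Finset.mem_univ,
      true_and]
    constructor
    · rintro ⟨⟨g, hg⟩, hp⟩; exact ⟨⟨g, hg.symm⟩, hp⟩
    · rintro ⟨⟨g, hg⟩, hp⟩; exact ⟨⟨g, hg.symm⟩, hp⟩
  rw [hset1, hset2, hfin _ (Finset.filter_subset _ _), hfin S le_rfl]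
  have hcard : ((S.filter fun b => permPValue T b w ≤ α).card : ℝ≥0∞)
      ≤ ENNReal.ofReal α * (S.card : ℝ≥0∞) := by
    rw [← ENNReal.ofReal_natCast (S.filter fun b => permPValue T b w ≤ α).card,
      ← ENNReal.ofReal_natCast S.card, ← ENNReal.ofReal_mul hα0]
    exact ENNReal.ofReal_le_ofReal (counting_main T a w α hα0)
  calc ((S.filter fun b => permPValue T b w ≤ α).card : ℝ≥0∞) * νA {a}
      ≤ (ENNReal.ofReal α * (S.card : ℝ≥0∞)) * νA {a} := mul_le_mul_left hcard _
    _ = ENNReal.ofReal α * ((S.card : ℝ≥0∞) * νA {a}) := by ring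

lemma ae_le_const_of_setIntegral_le {Ω : Type*} {m m0 : MeasurableSpace Ω} (hm : m ≤ m0)
    {ν : Measure Ω} [IsFiniteMeasure ν] {g : Ω → ℝ}
    (hgm : StronglyMeasurable[m] g) (hgi : Integrable g ν) {c : ℝ}
    (hc : ∀ s : Set Ω, MeasurableSet[m] s → ∫ x in s, g x ∂ν ≤ c * (ν s).toReal) :
    ∀ᵐ ω ∂ν, g ω ≤ c := by
  set φ : Ω → ℝ := fun x => c - g x with hφ
  have hφm : StronglyMeasurable[m] φ := stronglyMeasurable_const.sub hgm
  have hφi : Integrable φ ν := (integrable_const c).sub hgi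
  have hφi' : Integrable φ (ν.trim hm) := hφi.trim hm hφm
  haveI : IsFiniteMeasure (ν.trim hm) := isFiniteMeasure_trim hm
  have h0 : 0 ≤ᵐ[ν.trim hm] φ := by
    apply ae_nonneg_of_forall_setIntegral_nonneg hφi'
    intro s hs _
    rw [← setIntegral_trim hm hφm hs]
    have h1 : ∫ x in s, φ x ∂ν = (ν s).toReal * c - ∫ x in s, g x ∂ν := by
      rw [hφ]
      rw [integral_sub (integrableOn_const (C := c) (measure_ne_top ν s)) hgi.integrableOn]
      simp [setIntegral_const, smul_eq_mul]; exact Or.inl rfl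
    rw [h1]
    have := hc s hs
    linarith [this]
  have h1 : g ≤ᵐ[ν.trim hm] fun _ => c := by
    filter_upwards [h0] with x hx
    simpa [hφ] using hx
  exact ae_le_of_ae_le_trim h1

lemma measurable_permMat {n : ℕ} (g : Equiv.Perm (Fin n)) :
    Measurable (fun M : Fin n → Fin n → ℝ => permMat g M) :=
  measurable_pi_lambda _ fun i => measurable_pi_lambda _ fun j =>
    (measurable_pi_apply (g j)).comp (measurable_pi_apply (g i))

lemma permMat_inj {n : ℕ} (g : Equiv.Perm (Fin n)) :
    Function.Injective (fun M : Fin n → Fin n → ℝ => permMat g M) := by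
  intro M N h
  have h2 := congrArg (permMat g⁻¹) h
  simp only [permMat_permMat, mul_inv_cancel, permMat_one] at h2
  exact h2

/-- conditional size control of the permutation test under the sharp null.
`A` is exchangeable, independent of `Y(0)`, and `H₀ : Y(0) = Y(1)` holds.  Then, for every
`a` in the support of `A`, conditionally on the orbit event `{A ∈ S_a}` and on `W`, the
probability that the permutation p-value is at most `α` is at most `α`. -/
theorem permutation_test_size_control
    {Ω : Type*} [MeasurableSpace Ω] (μ : Measure Ω) [IsProbabilityMeasure μ]
    (n : ℕ) (hn : 2 ≤ n)
    (A Y0 Y1 : Ω → Fin n → Fin n → ℝ)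
    (hAmeas : Measurable A) (hY0meas : Measurable Y0) (hY1meas : Measurable Y1)
    (hA01 : ∀ ω i j, A ω i j = 0 ∨ A ω i j = 1)
    (hAsym : ∀ ω i j, A ω i j = A ω j i)
    (hAdiag : ∀ ω i, A ω i i = 0)
    -- Assumption 1 (exchangeability): gA has the same distribution as A for every g
    (hexch : ∀ g : Equiv.Perm (Fin n),
      μ.map (fun ω => permMat g (A ω)) = μ.map A)
    -- A is independent of Y(0)
    (hindep : IndepFun A Y0 μ)
    -- the sharp null hypothesis H₀ : Y_{ij}(0) = Y_{ij}(1) for all (i,j)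
    (hnull : Y0 = Y1)
    (T : (Fin n → Fin n → ℝ) → ((Fin n → Fin n → ℝ) × (Fin n → Fin n → ℝ)) → ℝ)
    (hT : Measurable fun p : (Fin n → Fin n → ℝ) × ((Fin n → Fin n → ℝ) × (Fin n → Fin n → ℝ)) =>
      T p.1 p.2)
    (α : ℝ) (hα : α ∈ Set.Icc (0 : ℝ) 1)
    -- a is in the support of A
    (a : Fin n → Fin n → ℝ) (ha : μ {ω | A ω = a} ≠ 0) :
    ∀ᵐ ω ∂(ProbabilityTheory.cond μ {ω | ∃ g : Equiv.Perm (Fin n), A ω = permMat g a}),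
      MeasureTheory.condExp
        (MeasurableSpace.comap (fun ω' => (Y0 ω', Y1 ω')) inferInstance)
        (ProbabilityTheory.cond μ {ω | ∃ g : Equiv.Perm (Fin n), A ω = permMat g a})
        (Set.indicator {ω' | permPValue T (A ω') (Y0 ω', Y1 ω') ≤ α} (fun _ => (1 : ℝ)))
        ω ≤ α := by
  subst hnull
  -- the orbit set in matrix space
  set Sset : Set (Fin n → Fin n → ℝ) := {x | ∃ g : Equiv.Perm (Fin n), x = permMat g a}
    with hSset_def
  have hSsetm : MeasurableSet Sset := by
    have : Sset = ⋃ g : Equiv.Perm (Fin n), {permMat g a} := by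
      ext x
      simp only [hSset_def, Set.mem_setOf_eq, Set.mem_iUnion, Set.mem_singleton_iff]
    rw [this]
    exact MeasurableSet.iUnion fun g => measurableSet_singleton _
  -- the orbit event
  set E := {ω | ∃ g : Equiv.Perm (Fin n), A ω = permMat g a} with hE_def
  have hE : MeasurableSet E := by
    have : E = ⋃ g : Equiv.Perm (Fin n), A ⁻¹' {permMat g a} := by
      ext ω; simp [hE_def]
    rw [this]
    exact MeasurableSet.iUnion fun g => hAmeas (measurableSet_singleton _)
  have hμE : μ E ≠ 0 := by
    intro h0
    apply ha
    refine measure_mono_null ?_ h0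
    intro ω hω
    exact ⟨1, by simpa [permMat_one] using hω⟩
  set ν := μ[|E] with hν_def
  haveI : IsProbabilityMeasure ν := cond_isProbabilityMeasure hμE
  set W' := fun ω' => (Y0 ω', Y0 ω') with hW'_def
  have hW' : Measurable W' := hY0meas.prodMk hY0meas
  -- measurability of the p-value
  have hpvalJ : Measurable fun p :
      (Fin n → Fin n → ℝ) × ((Fin n → Fin n → ℝ) × (Fin n → Fin n → ℝ)) =>
      permPValue T p.1 p.2 := by
    unfold permPValue
    apply Measurable.const_mul
    apply Finset.measurable_sum
    intro g _
    refine Measurable.ite ?_ measurable_const measurable_const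
    exact measurableSet_le hT
      (hT.comp (((measurable_permMat g).comp measurable_fst).prodMk measurable_snd))
  set P := {ω' | permPValue T (A ω') (W' ω') ≤ α} with hP_def
  have hPmeas : MeasurableSet P := by
    have : P = (fun ω => (A ω, W' ω)) ⁻¹' {p | permPValue T p.1 p.2 ≤ α} := rfl
    rw [this]
    exact (hAmeas.prodMk hW') (measurableSet_le hpvalJ measurable_const)
  set f := Set.indicator P (fun _ => (1 : ℝ)) with hf_def
  have hf_int : Integrable f ν := by
    rw [hf_def, integrable_indicator_iff hPmeas]
    exact integrableOn_const (measure_ne_top ν P)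
  -- equal point masses on the orbit
  have hpoint : ∀ g : Equiv.Perm (Fin n), (μ.map A) {permMat g a} = (μ.map A) {a} := by
    intro g
    have hmg : Measurable fun ω => permMat g (A ω) := (measurable_permMat g).comp hAmeas
    have hpre : (fun ω => permMat g (A ω)) ⁻¹' {permMat g a} = A ⁻¹' {a} := by
      ext ω
      simp only [Set.mem_preimage, Set.mem_singleton_iff]
      exact ⟨fun h => permMat_inj g h, fun h => by rw [h]⟩
    calc (μ.map A) {permMat g a}
        = (μ.map (fun ω => permMat g (A ω))) {permMat g a} := by rw [hexch g]
      _ = μ ((fun ω => permMat g (A ω)) ⁻¹' {permMat g a}) :=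
          Measure.map_apply hmg (measurableSet_singleton _)
      _ = μ (A ⁻¹' {a}) := by rw [hpre]
      _ = (μ.map A) {a} := (Measure.map_apply hAmeas (measurableSet_singleton _)).symm
  -- independence of A and W'
  have hAW : IndepFun A W' μ := by
    have h := hindep.comp (φ := id) (ψ := fun y => (y, y)) measurable_id
      (measurable_id.prodMk measurable_id)
    exact h
  have hmap : μ.map (fun ω => (A ω, W' ω)) = (μ.map A).prod (μ.map W') :=
    (indepFun_iff_map_prod_eq_prod_map_map hAmeas.aemeasurable hW'.aemeasurable).mp hAW
  haveI : IsProbabilityMeasure (μ.map A) := Measure.isProbabilityMeasure_map hAmeas.aemeasurable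
  haveI : IsProbabilityMeasure (μ.map W') := Measure.isProbabilityMeasure_map hW'.aemeasurable
  -- key measure inequality
  have hkey : ∀ B : Set ((Fin n → Fin n → ℝ) × (Fin n → Fin n → ℝ)), MeasurableSet B →
      μ (E ∩ (P ∩ W' ⁻¹' B)) ≤ ENNReal.ofReal α * μ (E ∩ W' ⁻¹' B) := by
    intro B hB
    set C : Set ((Fin n → Fin n → ℝ) × ((Fin n → Fin n → ℝ) × (Fin n → Fin n → ℝ))) :=
      (Prod.fst ⁻¹' Sset) ∩
        ({p | permPValue T p.1 p.2 ≤ α} ∩ Prod.snd ⁻¹' B) with hC_def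
    have hC : MeasurableSet C :=
      (hSsetm.preimage measurable_fst).inter
        ((measurableSet_le hpvalJ measurable_const).inter (hB.preimage measurable_snd))
    have hpre1 : E ∩ (P ∩ W' ⁻¹' B) = (fun ω => (A ω, W' ω)) ⁻¹' C := rfl
    have hpre2 : E ∩ W' ⁻¹' B = (fun ω => (A ω, W' ω)) ⁻¹' (Sset ×ˢ B) := rfl
    rw [hpre1, hpre2, ← Measure.map_apply (hAmeas.prodMk hW') hC,
      ← Measure.map_apply (hAmeas.prodMk hW') (hSsetm.prod hB), hmap,
      Measure.prod_apply_symm hC, Measure.prod_apply_symm (hSsetm.prod hB),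
      ← lintegral_const_mul' _ _ ENNReal.ofReal_ne_top]
    apply lintegral_mono
    intro w
    dsimp only
    by_cases hwB : w ∈ B
    · have e1 : (fun x => (x, w)) ⁻¹' C
          = {x | (∃ g : Equiv.Perm (Fin n), x = permMat g a) ∧ permPValue T x w ≤ α} := by
        ext x
        simp [hC_def, hSset_def, hwB]
      have e2 : (fun x => (x, w)) ⁻¹' (Sset ×ˢ B) = Sset := by
        ext x
        simp [Set.mem_prod, hwB]
      rw [e1, e2]
      exact orbit_measure_bound T a w α hα.1 (μ.map A) hpoint
    · have e1 : (fun x => (x, w)) ⁻¹' C = ∅ := by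
        ext x
        simp [hC_def, hwB]
      rw [e1]
      simp
  -- conclude via set integrals
  have hm : MeasurableSpace.comap W' inferInstance ≤ _ := hW'.comap_le
  haveI : IsFiniteMeasure (ν.trim hm) := isFiniteMeasure_trim hm
  haveI : SigmaFinite (ν.trim hm) := inferInstance
  apply ae_le_const_of_setIntegral_le hm stronglyMeasurable_condExp integrable_condExp
  intro s hs
  rw [setIntegral_condExp hm hf_int hs]
  obtain ⟨B, hB, rfl⟩ := hs
  have h1 : ∫ x in W' ⁻¹' B, f x ∂ν = (ν (P ∩ W' ⁻¹' B)).toReal := by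
    rw [hf_def, setIntegral_indicator hPmeas, setIntegral_const]
    simp [Set.inter_comm]; rfl
  have h2 : ν (P ∩ W' ⁻¹' B) ≤ ENNReal.ofReal α * ν (W' ⁻¹' B) := by
    rw [hν_def, cond_apply hE, cond_apply hE]
    calc (μ E)⁻¹ * μ (E ∩ (P ∩ W' ⁻¹' B))
        ≤ (μ E)⁻¹ * (ENNReal.ofReal α * μ (E ∩ W' ⁻¹' B)) :=
          mul_le_mul_right (hkey B hB) _
      _ = ENNReal.ofReal α * ((μ E)⁻¹ * μ (E ∩ W' ⁻¹' B)) := by ring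
  rw [h1]
  have hfin : ENNReal.ofReal α * ν (W' ⁻¹' B) ≠ ⊤ :=
    ENNReal.mul_ne_top ENNReal.ofReal_ne_top (measure_ne_top ν _)
  have h3 := ENNReal.toReal_mono hfin h2
  rw [ENNReal.toReal_mul, ENNReal.toReal_ofReal hα.1] at h3
  exact h3
end

section
/- Under Assumptions 1–3 and 7, for all i ∈ [n] and j ≠ i: (a) μ_{ij}(1) := E[1{A_{ij}=1} Y_{ij} | P_{ij}] = P_{ij} · E[Y_{ij}(1) | P_{ij}] almost surely; and (b) for every i' ∈ N_i, almost surely (1/(n−1)) Σ_{j≠i} (μ_{i'j}(1) − μ_{ij}(1))² ≤ 2(C_Y² + (C_P^+)² L_Y²) · (1/(n−1)) Σ_{j≠i} (P_{i'j} − P_{ij})². -/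
open MeasureTheory ProbabilityTheory

namespace Stmt15

lemma ae_indepFun_condexpKernel {Ω : Type*} {m' : MeasurableSpace Ω} {mΩ : MeasurableSpace Ω}
    [StandardBorelSpace Ω]
    (μ : Measure Ω) [IsProbabilityMeasure μ] (hm' : m' ≤ mΩ)
    {X Y : Ω → ℝ} (hX : Measurable X) (hY : Measurable Y)
    (h : CondIndepFun m' hm' X Y μ) :
    ∀ᵐ ω ∂μ, IndepFun X Y (condExpKernel μ m' ω) := by
  have hQ : ∀ᵐ ω ∂μ, ∀ q r : ℚ,
      condExpKernel μ m' ω (X ⁻¹' Set.Iio (q : ℝ) ∩ Y ⁻¹' Set.Iio (r : ℝ))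
        = condExpKernel μ m' ω (X ⁻¹' Set.Iio (q : ℝ))
          * condExpKernel μ m' ω (Y ⁻¹' Set.Iio (r : ℝ)) := by
    rw [ae_all_iff]
    intro q
    rw [ae_all_iff]
    intro r
    have h1 : (μ⟦X ⁻¹' Set.Iio (q : ℝ) ∩ Y ⁻¹' Set.Iio (r : ℝ)|m'⟧) =ᵐ[μ]
        fun ω => (μ⟦X ⁻¹' Set.Iio (q : ℝ)|m'⟧) ω * (μ⟦Y ⁻¹' Set.Iio (r : ℝ)|m'⟧) ω :=
      (@condIndepFun_iff_condExp_inter_preimage_eq_mul Ω ℝ ℝ m' mΩ _ hm' μ _ X Y _ _ hX hY).mp h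
        (Set.Iio (q : ℝ)) (Set.Iio (r : ℝ)) measurableSet_Iio measurableSet_Iio
    have h2 := condExpKernel_ae_eq_condExp (μ := μ) hm'
      ((hX measurableSet_Iio).inter (hY measurableSet_Iio) :
        MeasurableSet (X ⁻¹' Set.Iio (q : ℝ) ∩ Y ⁻¹' Set.Iio (r : ℝ)))
    have h3 := condExpKernel_ae_eq_condExp (μ := μ) hm'
      (hX (measurableSet_Iio : MeasurableSet (Set.Iio (q : ℝ))))
    have h4 := condExpKernel_ae_eq_condExp (μ := μ) hm'
      (hY (measurableSet_Iio : MeasurableSet (Set.Iio (r : ℝ))))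
    filter_upwards [h1, h2, h3, h4] with ω e1 e2 e3 e4
    refine (ENNReal.toReal_eq_toReal_iff' (measure_ne_top _ _)
      (ENNReal.mul_ne_top (measure_ne_top _ _) (measure_ne_top _ _))).mp ?_
    rw [ENNReal.toReal_mul, ← measureReal_def, ← measureReal_def, ← measureReal_def, e2, e3, e4]
    exact e1
  filter_upwards [hQ] with ω hω
  haveI : IsProbabilityMeasure (condExpKernel μ m' ω) := inferInstance
  rw [IndepFun_iff_Indep]
  have hgen : ∀ (Z : Ω → ℝ), Measurable Z →
      MeasurableSpace.comap Z (inferInstance : MeasurableSpace ℝ)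
        = MeasurableSpace.generateFrom
            {s : Set Ω | ∃ t ∈ (⋃ a : ℚ, {Set.Iio (a : ℝ)}), Z ⁻¹' t = s} := by
    intro Z _
    conv_lhs => rw [show (inferInstance : MeasurableSpace ℝ) = borel ℝ from
      BorelSpace.measurable_eq, Real.borel_eq_generateFrom_Iio_rat]
    rw [MeasurableSpace.comap_generateFrom]
    rfl
  refine IndepSets.indep hX.comap_le hY.comap_le
    (Real.isPiSystem_Iio_rat.comap X) (Real.isPiSystem_Iio_rat.comap Y)
    (hgen X hX) (hgen Y hY) ?_
  rw [IndepSets_iff]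
  rintro _ _ ⟨s, hs, rfl⟩ ⟨t, ht, rfl⟩
  simp only [Set.mem_iUnion, Set.mem_singleton_iff] at hs ht
  obtain ⟨q, rfl⟩ := hs
  obtain ⟨r, rfl⟩ := ht
  exact hω q r

lemma condexp_mul_of_condIndepFun {Ω : Type*} {m' : MeasurableSpace Ω} {mΩ : MeasurableSpace Ω}
    [StandardBorelSpace Ω]
    (μ : Measure Ω) [IsProbabilityMeasure μ] (hm' : m' ≤ mΩ)
    {X Y : Ω → ℝ} (hX : Measurable X) (hY : Measurable Y)
    {CX CY : ℝ} (hXb : ∀ᵐ ω ∂μ, |X ω| ≤ CX) (hYb : ∀ᵐ ω ∂μ, |Y ω| ≤ CY)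
    (h : CondIndepFun m' hm' X Y μ) :
    MeasureTheory.condExp m' μ (fun ω => X ω * Y ω) =ᵐ[μ]
      fun ω => (MeasureTheory.condExp m' μ X ω) * (MeasureTheory.condExp m' μ Y ω) := by
  have hXint : Integrable X μ := Integrable.mono' (integrable_const CX)
    hX.aestronglyMeasurable (hXb.mono fun ω hh => by rwa [Real.norm_eq_abs])
  have hYint : Integrable Y μ := Integrable.mono' (integrable_const CY)
    hY.aestronglyMeasurable (hYb.mono fun ω hh => by rwa [Real.norm_eq_abs])
  have hXYint : Integrable (fun ω => X ω * Y ω) μ := by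
    refine Integrable.mono' (integrable_const (CX * CY)) (hX.mul hY).aestronglyMeasurable ?_
    filter_upwards [hXb, hYb] with ω h1 h2
    rw [Real.norm_eq_abs, abs_mul]
    exact mul_le_mul h1 h2 (abs_nonneg _) ((abs_nonneg _).trans h1)
  have hind := ae_indepFun_condexpKernel μ hm' hX hY h
  filter_upwards [condExp_ae_eq_integral_condExpKernel hm' hXYint,
    condExp_ae_eq_integral_condExpKernel hm' hXint,
    condExp_ae_eq_integral_condExpKernel hm' hYint, hind] with ω e0 e1 e2 hiω
  rw [e0, e1, e2]
  exact hiω.integral_fun_mul_eq_mul_integral hX.aestronglyMeasurable hY.aestronglyMeasurable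

lemma condexp_threshold {Ω : Type*} {mΩ : MeasurableSpace Ω} {β : Type*} [MeasurableSpace β]
    (μ : Measure Ω) [IsProbabilityMeasure μ]
    {W : Ω → β} (hW : Measurable W)
    {V : Ω → ℝ} (hV : Measurable V)
    (hVunif : μ.map V = volume.restrict (Set.Icc (0 : ℝ) 1))
    (hindep : IndepFun V W μ)
    {F : β → ℝ} (hF : Measurable F) (hFrange : ∀ᵐ w ∂(μ.map W), F w ∈ Set.Icc (0 : ℝ) 1) :
    MeasureTheory.condExp (MeasurableSpace.comap W inferInstance) μ
        (fun ω => if V ω ≤ F (W ω) then (1 : ℝ) else 0)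
      =ᵐ[μ] fun ω => F (W ω) := by
  have hm : MeasurableSpace.comap W inferInstance ≤ mΩ := hW.comap_le
  have hSmeas : MeasurableSet {ω | V ω ≤ F (W ω)} := measurableSet_le hV (hF.comp hW)
  have hfmeas' : Measurable (fun ω => if V ω ≤ F (W ω) then (1 : ℝ) else 0) :=
    Measurable.ite hSmeas measurable_const measurable_const
  have hfint : Integrable (fun ω => if V ω ≤ F (W ω) then (1 : ℝ) else 0) μ := by
    refine Integrable.mono' (integrable_const 1) hfmeas'.aestronglyMeasurable ?_
    exact Filter.Eventually.of_forall fun ω => by by_cases hc : V ω ≤ F (W ω) <;> simp [hc]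
  have hFWae : ∀ᵐ ω ∂μ, F (W ω) ∈ Set.Icc (0 : ℝ) 1 :=
    (ae_map_iff hW.aemeasurable (hF measurableSet_Icc)).mp hFrange
  have hgint : Integrable (fun ω => F (W ω)) μ := by
    refine Integrable.mono' (integrable_const 1) (hF.comp hW).aestronglyMeasurable ?_
    filter_upwards [hFWae] with ω hc
    rw [Real.norm_eq_abs, abs_le]
    exact ⟨by linarith [hc.1], hc.2⟩
  refine (ae_eq_condExp_of_forall_setIntegral_eq hm hfint
    (fun s _ _ => hgint.integrableOn) ?_ ?_).symm
  swap
  · exact StronglyMeasurable.aestronglyMeasurable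
      (Measurable.stronglyMeasurable (hF.comp (measurable_iff_comap_le.mpr le_rfl)))
  rintro s ⟨B, hB, rfl⟩ -
  have hmapprod : μ.map (fun ω => (V ω, W ω))
      = (volume.restrict (Set.Icc (0 : ℝ) 1)).prod (μ.map W) := by
    rw [← hVunif]
    exact (indepFun_iff_map_prod_eq_prod_map_map hV.aemeasurable hW.aemeasurable).mp hindep
  set T : Set (ℝ × β) := {p | p.1 ≤ F p.2 ∧ p.2 ∈ B} with hT
  have hTmeas : MeasurableSet T :=
    (measurableSet_le measurable_fst (hF.comp measurable_snd)).inter (measurable_snd hB)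
  have hRHS : ∫ x in W ⁻¹' B, (if V x ≤ F (W x) then (1 : ℝ) else 0) ∂μ
      = (((volume.restrict (Set.Icc (0 : ℝ) 1)).prod (μ.map W)) T).toReal := by
    rw [← integral_indicator (hW hB)]
    have heq : (fun x => (W ⁻¹' B).indicator
          (fun x => if V x ≤ F (W x) then (1 : ℝ) else 0) x)
        = fun x => T.indicator (fun _ => (1 : ℝ)) ((fun ω => (V ω, W ω)) x) := by
      funext x
      by_cases hxB : W x ∈ B <;> by_cases hxV : V x ≤ F (W x) <;>
        simp [Set.indicator, hxB, hxV, hT]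
    rw [heq,
      ← integral_map (hV.prodMk hW).aemeasurable
        ((measurable_const.indicator hTmeas).aestronglyMeasurable),
      hmapprod]
    exact integral_indicator_one hTmeas
  have hslice : ((volume.restrict (Set.Icc (0 : ℝ) 1)).prod (μ.map W)) T
      = ∫⁻ w in B, ENNReal.ofReal (F w) ∂(μ.map W) := by
    rw [Measure.prod_apply_symm hTmeas, ← lintegral_indicator hB]
    refine lintegral_congr_ae ?_
    filter_upwards [hFrange] with w hw
    by_cases hwB : w ∈ B
    · have h1 : ((fun v => (v, w)) ⁻¹' T) = Set.Iic (F w) := by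
        ext v; simp [hT, hwB]
      have h2 : Set.Iic (F w) ∩ Set.Icc (0 : ℝ) 1 = Set.Icc 0 (F w) := by
        ext v
        constructor
        · rintro ⟨hv1, hv2, _⟩; exact ⟨hv2, hv1⟩
        · rintro ⟨hv1, hv2⟩; exact ⟨hv2, hv1, hv2.trans hw.2⟩
      rw [h1, Set.indicator_of_mem hwB, Measure.restrict_apply measurableSet_Iic, h2,
        Real.volume_Icc, sub_zero]
    · have h1 : ((fun v => (v, w)) ⁻¹' T) = ∅ := by
        ext v; simp [hT, hwB]
      rw [h1, Set.indicator_of_notMem hwB]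
      simp
  have hLHS : ∫ x in W ⁻¹' B, F (W x) ∂μ
      = (∫⁻ w in B, ENNReal.ofReal (F w) ∂(μ.map W)).toReal := by
    rw [← setIntegral_map hB hF.aestronglyMeasurable hW.aemeasurable,
      integral_eq_lintegral_of_nonneg_ae (ae_restrict_of_ae (hFrange.mono fun w hw => hw.1))
        hF.aestronglyMeasurable.restrict]
  rw [hLHS, hRHS, hslice]

end Stmt15

/-- under Assumptions 1–3 and 7, (a) `μ_{ij}(1) = E[1{A_{ij}=1}Y_{ij} | P_{ij}]
equals `P_{ij}·E[Y_{ij}(1) | P_{ij}]` a.s., and (b) for every `i' ∈ N_i`, almost surely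
`(1/(n−1)) Σ_{j≠i} (μ_{i'j}(1) − μ_{ij}(1))² ≤ 2(C_Y² + (C_P⁺)² L_Y²)·(1/(n−1)) Σ_{j≠i} (P_{i'j} − P_{ij})²`. -/
theorem mu_one_identity_and_lipschitz_bound
    {Ω : Type*} [MeasurableSpace Ω] [StandardBorelSpace Ω]
    (μ : Measure Ω) [IsProbabilityMeasure μ]
    (n : ℕ) (hn : 2 ≤ n)
    -- the graphon
    (f : ℝ → ℝ → ℝ)
    (hfmeas : Measurable fun p : ℝ × ℝ => f p.1 p.2)
    (hfsym : ∀ u v, f u v = f v u)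
    (hfrange : ∀ u v, u ∈ Set.Icc (0 : ℝ) 1 → v ∈ Set.Icc (0 : ℝ) 1 →
      f u v ∈ Set.Icc (0 : ℝ) 1)
    -- unit-level and dyad-level latent variables, mutually independent Uniform[0,1]
    (U : Fin n → Ω → ℝ) (Ud : Fin n → Fin n → Ω → ℝ)
    (hUmeas : ∀ i, Measurable (U i)) (hUdmeas : ∀ i j, Measurable (Ud i j))
    (hUdsym : ∀ i j, Ud i j = Ud j i)
    (hUunif : ∀ i, μ.map (U i) = volume.restrict (Set.Icc (0 : ℝ) 1))
    (hUdunif : ∀ i j, i ≠ j → μ.map (Ud i j) = volume.restrict (Set.Icc (0 : ℝ) 1))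
    (hiid : iIndepFun
      (m := fun _ : Fin n ⊕ {p : Fin n × Fin n // p.1 < p.2} => (inferInstance : MeasurableSpace ℝ))
      (Sum.elim U fun p => Ud p.1.1 p.1.2) μ)
    -- Assumption 1: treatment mechanism A_{ij} = 1{f(U_i,U_j) ≥ U_{ij}}
    (A : Fin n → Fin n → Ω → ℝ)
    (hA : ∀ i j, i ≠ j → ∀ ω, A i j ω = if Ud i j ω ≤ f (U i ω) (U j ω) then 1 else 0)
    (hAdiag : ∀ i ω, A i i ω = 0)
    -- the propensity score P_{ij} = f(U_i,U_j)
    (P : Fin n → Fin n → Ω → ℝ) (hPmeas : ∀ i j, Measurable (P i j))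
    (hP : ∀ i j, i ≠ j → ∀ ω, P i j ω = f (U i ω) (U j ω))
    (hPdiag : ∀ i ω, P i i ω = 0)
    -- potential outcomes and the observed outcome
    (Y0 Y1 Y : Fin n → Fin n → Ω → ℝ)
    (hY0meas : ∀ i j, Measurable (Y0 i j)) (hY1meas : ∀ i j, Measurable (Y1 i j))
    (hY0diag : ∀ i ω, Y0 i i ω = 0) (hY1diag : ∀ i ω, Y1 i i ω = 0)
    (hY : ∀ i j ω, Y i j ω = A i j ω * Y1 i j ω + (1 - A i j ω) * Y0 i j ω)
    -- Assumption 2: (Y_{ij}(0), Y_{ij}(1)) ⫫ A_{ij} | (U_i, U_j)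
    (hsel : ∀ i j, i ≠ j →
      CondIndepFun (MeasurableSpace.comap (fun ω => (U i ω, U j ω)) inferInstance)
        (Measurable.comap_le ((hUmeas i).prodMk (hUmeas j)))
        (fun ω => (Y0 i j ω, Y1 i j ω)) (A i j) μ)
    -- Assumption 3: overlap
    (CPlo CPhi : ℝ) (hCPlo : 0 < CPlo) (hCPle : CPlo ≤ CPhi) (hCPhi : CPhi < 1)
    (hoverlap : ∀ i j, i ≠ j → ∀ᵐ ω ∂μ, P i j ω ∈ Set.Icc CPlo CPhi)
    -- the pseudometric d̃ and the bandwidth b (N_i = {i' ≠ i : d̃(i,i') ≤ b})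
    (dtil : Fin n → Fin n → Ω → ℝ)
    (hdtil : ∀ i i' ω, dtil i i' ω = sSup {x : ℝ | ∃ k : Fin n, k ≠ i ∧ k ≠ i' ∧
      x = |(1 / (n : ℝ)) * ∑ l : Fin n, (A i l ω - A i' l ω) * A k l ω|})
    (b : ℝ) (hb : 0 < b)
    -- Assumption 7(i): Y_{ij}(a) = y_a(U_i, U_j, ξ_{ij}(a)), with the ξ's independent
    -- of each other and of the U's
    (y0fn y1fn : ℝ → ℝ → ℝ → ℝ) (ξ0 ξ1 : Fin n → Fin n → Ω → ℝ)
    (hξmeas : ∀ i j, Measurable (ξ0 i j) ∧ Measurable (ξ1 i j))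
    (hy0 : ∀ i j, i ≠ j → ∀ ω, Y0 i j ω = y0fn (U i ω) (U j ω) (ξ0 i j ω))
    (hy1 : ∀ i j, i ≠ j → ∀ ω, Y1 i j ω = y1fn (U i ω) (U j ω) (ξ1 i j ω))
    (hξindep : iIndepFun
      (m := fun _ : (Fin n ⊕ {p : Fin n × Fin n // p.1 < p.2})
          ⊕ ({p : Fin n × Fin n // p.1 ≠ p.2} × Bool) => (inferInstance : MeasurableSpace ℝ))
      (Sum.elim (Sum.elim U fun p => Ud p.1.1 p.1.2)
        (fun q => if q.2 then ξ1 q.1.1.1 q.1.1.2 else ξ0 q.1.1.1 q.1.1.2)) μ)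
    -- Assumption 7(ii): boundedness of the potential outcomes
    (CY : ℝ) (hCY : 0 < CY)
    (hYbdd : ∀ i j, i ≠ j → ∀ᵐ ω ∂μ, |Y0 i j ω| ≤ CY ∧ |Y1 i j ω| ≤ CY)
    -- Assumption 7(iii): Lipschitz regression functions on the neighborhood
    (LY : ℝ) (hLY : 0 < LY)
    (hlip : ∀ i i', i' ≠ i → ∀ᵐ ω ∂μ, dtil i i' ω ≤ b → ∀ j, j ≠ i → j ≠ i' →
      |MeasureTheory.condExp (MeasurableSpace.comap (P i' j) inferInstance) μ (Y1 i' j) ω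
          - MeasureTheory.condExp (MeasurableSpace.comap (P i j) inferInstance) μ (Y1 i j) ω|
        ≤ LY * |P i' j ω - P i j ω|
      ∧ |MeasureTheory.condExp (MeasurableSpace.comap (P i' j) inferInstance) μ (Y0 i' j) ω
          - MeasureTheory.condExp (MeasurableSpace.comap (P i j) inferInstance) μ (Y0 i j) ω|
        ≤ LY * |P i' j ω - P i j ω|) :
    -- (a) μ_{ij}(1) = P_{ij} · E[Y_{ij}(1) | P_{ij}] a.s.
    (∀ i j, i ≠ j →
      (MeasureTheory.condExp (MeasurableSpace.comap (P i j) inferInstance) μ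
          (fun ω => A i j ω * Y i j ω))
        =ᵐ[μ]
      (fun ω => P i j ω *
        MeasureTheory.condExp (MeasurableSpace.comap (P i j) inferInstance) μ (Y1 i j) ω))
    -- (b) the rowwise Lipschitz-type bound on the neighborhood
    ∧ (∀ i i', i' ≠ i → ∀ᵐ ω ∂μ, dtil i i' ω ≤ b →
        (1 / ((n : ℝ) - 1)) * ∑ j ∈ Finset.univ.erase i,
          (MeasureTheory.condExp (MeasurableSpace.comap (P i' j) inferInstance) μ
              (fun ω' => A i' j ω' * Y i' j ω') ω
            - MeasureTheory.condExp (MeasurableSpace.comap (P i j) inferInstance) μ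
                (fun ω' => A i j ω' * Y i j ω') ω) ^ 2
          ≤ 2 * (CY ^ 2 + CPhi ^ 2 * LY ^ 2) *
            ((1 / ((n : ℝ) - 1)) * ∑ j ∈ Finset.univ.erase i,
              (P i' j ω - P i j ω) ^ 2)) := by
    classical
  have hgmeas : ∀ x, Measurable ((Sum.elim U fun p : {p : Fin n × Fin n // p.1 < p.2} => Ud p.1.1 p.1.2) x) := by
    rintro (a | ⟨⟨a, c⟩, hac⟩)
    · exact hUmeas a
    · exact hUdmeas a c
  have key : ∀ i j, i ≠ j →
      (MeasureTheory.condExp (MeasurableSpace.comap (P i j) inferInstance) μ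
          (fun ω => A i j ω * Y i j ω))
        =ᵐ[μ]
      (fun ω => P i j ω *
        MeasureTheory.condExp (MeasurableSpace.comap (P i j) inferInstance) μ (Y1 i j) ω) := by
    intro i j hij
    have hWmeas : Measurable (fun ω => (U i ω, U j ω)) := (hUmeas i).prodMk (hUmeas j)
    have h𝓂le : MeasurableSpace.comap (fun ω => (U i ω, U j ω)) inferInstance ≤ _ :=
      hWmeas.comap_le
    have hPeq : P i j = (fun p : ℝ × ℝ => f p.1 p.2) ∘ (fun ω => (U i ω, U j ω)) :=
      funext (hP i j hij)
    have hmle : MeasurableSpace.comap (P i j) inferInstance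
        ≤ MeasurableSpace.comap (fun ω => (U i ω, U j ω)) inferInstance := by
      rw [hPeq, ← MeasurableSpace.comap_comp]
      exact MeasurableSpace.comap_mono hfmeas.comap_le
    have hAeq : A i j = fun ω => if Ud i j ω ≤ f (U i ω) (U j ω) then 1 else 0 :=
      funext (hA i j hij)
    have hAmeas : Measurable (A i j) := by
      rw [hAeq]
      exact Measurable.ite (measurableSet_le (hUdmeas i j) (hfmeas.comp hWmeas))
        measurable_const measurable_const
    have hAY : (fun ω => A i j ω * Y i j ω) = fun ω => A i j ω * Y1 i j ω := by
      funext ω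
      rw [hY i j ω, hA i j hij ω]
      by_cases hc : Ud i j ω ≤ f (U i ω) (U j ω) <;> simp [hc]
    have hiVW : IndepFun (Ud i j) (fun ω => (U i ω, U j ω)) μ := by
      rcases lt_or_gt_of_ne hij with hlt | hgt
      · exact (hiid.indepFun_prodMk hgmeas (Sum.inl i) (Sum.inl j)
          (Sum.inr ⟨(i, j), hlt⟩) (by simp) (by simp)).symm
      · have h0 := (hiid.indepFun_prodMk hgmeas (Sum.inl i) (Sum.inl j)
          (Sum.inr ⟨(j, i), hgt⟩) (by simp) (by simp)).symm
        simp only [Sum.elim_inl, Sum.elim_inr] at h0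
        rwa [← hUdsym i j] at h0
    have hmapW : μ.map (fun ω => (U i ω, U j ω))
        = (volume.restrict (Set.Icc (0 : ℝ) 1)).prod (volume.restrict (Set.Icc (0 : ℝ) 1)) := by
      have hUU : IndepFun (U i) (U j) μ :=
        hiid.indepFun (show (Sum.inl i : Fin n ⊕ _) ≠ Sum.inl j by simp [hij])
      rw [(indepFun_iff_map_prod_eq_prod_map_map (hUmeas i).aemeasurable
        (hUmeas j).aemeasurable).mp hUU, hUunif i, hUunif j]
    have hFrange : ∀ᵐ w ∂(μ.map (fun ω => (U i ω, U j ω))),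
        (fun p : ℝ × ℝ => f p.1 p.2) w ∈ Set.Icc (0 : ℝ) 1 := by
      rw [hmapW, Measure.prod_restrict]
      filter_upwards [ae_restrict_mem (measurableSet_Icc.prod measurableSet_Icc)] with w hw
      exact hfrange w.1 w.2 hw.1 hw.2
    have hcondA0 := Stmt15.condexp_threshold μ hWmeas (hUdmeas i j) (hUdunif i j hij)
      hiVW hfmeas hFrange
    have hcondA : MeasureTheory.condExp
        (MeasurableSpace.comap (fun ω => (U i ω, U j ω)) inferInstance) μ (A i j)
        =ᵐ[μ] P i j := by
      have e2 : A i j =ᵐ[μ]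
          (fun ω => if Ud i j ω ≤ (fun p : ℝ × ℝ => f p.1 p.2) ((U i ω, U j ω)) then (1 : ℝ)
            else 0) :=
        Filter.Eventually.of_forall fun ω => by rw [hA i j hij ω]
      exact (condExp_congr_ae e2).trans (hcondA0.trans
        (Filter.Eventually.of_forall fun ω => (hP i j hij ω).symm))
    have hselY1 : CondIndepFun
        (MeasurableSpace.comap (fun ω => (U i ω, U j ω)) inferInstance)
        h𝓂le (A i j) (Y1 i j) μ := by
      have h1 := (hsel i j hij).comp measurable_snd measurable_id
      exact h1.symm
    have hAb : ∀ᵐ ω ∂μ, |A i j ω| ≤ 1 := by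
      refine Filter.Eventually.of_forall fun ω => ?_
      rw [hA i j hij ω]
      by_cases hc : Ud i j ω ≤ f (U i ω) (U j ω) <;> simp [hc]
    have hY1b : ∀ᵐ ω ∂μ, |Y1 i j ω| ≤ CY := (hYbdd i j hij).mono fun ω h => h.2
    have hprod := Stmt15.condexp_mul_of_condIndepFun μ h𝓂le hAmeas (hY1meas i j)
      hAb hY1b hselY1
    have step2 : MeasureTheory.condExp
        (MeasurableSpace.comap (fun ω => (U i ω, U j ω)) inferInstance) μ
        (fun ω => A i j ω * Y1 i j ω)
        =ᵐ[μ] fun ω => P i j ω * MeasureTheory.condExp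
          (MeasurableSpace.comap (fun ω => (U i ω, U j ω)) inferInstance) μ (Y1 i j) ω := by
      refine hprod.trans ?_
      filter_upwards [hcondA] with ω hh
      rw [hh]
    have hEbdd : ∀ᵐ ω ∂μ, |MeasureTheory.condExp
        (MeasurableSpace.comap (fun ω => (U i ω, U j ω)) inferInstance) μ (Y1 i j) ω| ≤ CY :=
      ae_bdd_condExp_of_ae_bdd (R := ⟨CY, hCY.le⟩) hY1b
    have hPbdd : ∀ᵐ ω ∂μ, |P i j ω| ≤ 1 := by
      filter_upwards [hoverlap i j hij] with ω h
      rw [abs_le]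
      constructor <;> nlinarith [h.1, h.2]
    have hintP : Integrable (P i j * MeasureTheory.condExp
        (MeasurableSpace.comap (fun ω => (U i ω, U j ω)) inferInstance) μ (Y1 i j)) μ := by
      refine Integrable.mono' (integrable_const CY)
        ((hPmeas i j).aestronglyMeasurable.mul
          (stronglyMeasurable_condExp.mono h𝓂le).aestronglyMeasurable) ?_
      filter_upwards [hPbdd, hEbdd] with ω h1 h2
      rw [Pi.mul_apply, Real.norm_eq_abs, abs_mul]
      nlinarith [mul_le_mul h1 h2 (abs_nonneg _) zero_le_one]
    have hPsm : StronglyMeasurable[MeasurableSpace.comap (P i j) inferInstance] (P i j) :=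
      (measurable_iff_comap_le.mpr le_rfl).stronglyMeasurable
    rw [hAY]
    have c1 : (MeasureTheory.condExp (MeasurableSpace.comap (P i j) inferInstance) μ
          (fun ω => A i j ω * Y1 i j ω))
        =ᵐ[μ] (MeasureTheory.condExp (MeasurableSpace.comap (P i j) inferInstance) μ
          (MeasureTheory.condExp
            (MeasurableSpace.comap (fun ω => (U i ω, U j ω)) inferInstance) μ
            (fun ω => A i j ω * Y1 i j ω))) := (condExp_condExp_of_le hmle h𝓂le).symm
    have c2 : (MeasureTheory.condExp (MeasurableSpace.comap (P i j) inferInstance) μ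
          (MeasureTheory.condExp
            (MeasurableSpace.comap (fun ω => (U i ω, U j ω)) inferInstance) μ
            (fun ω => A i j ω * Y1 i j ω)))
        =ᵐ[μ] (MeasureTheory.condExp (MeasurableSpace.comap (P i j) inferInstance) μ
          (fun ω => P i j ω * MeasureTheory.condExp
            (MeasurableSpace.comap (fun ω => (U i ω, U j ω)) inferInstance) μ (Y1 i j) ω)) :=
      condExp_congr_ae step2
    have c3 : (MeasureTheory.condExp (MeasurableSpace.comap (P i j) inferInstance) μ
          (fun ω => P i j ω * MeasureTheory.condExp
            (MeasurableSpace.comap (fun ω => (U i ω, U j ω)) inferInstance) μ (Y1 i j) ω))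
        =ᵐ[μ] (fun ω => P i j ω * MeasureTheory.condExp
          (MeasurableSpace.comap (P i j) inferInstance) μ
          (MeasureTheory.condExp
            (MeasurableSpace.comap (fun ω => (U i ω, U j ω)) inferInstance) μ (Y1 i j)) ω) := by
      have h3 := condExp_mul_of_stronglyMeasurable_left hPsm hintP integrable_condExp
      exact h3
    have c4 : (fun ω => P i j ω * MeasureTheory.condExp
          (MeasurableSpace.comap (P i j) inferInstance) μ
          (MeasureTheory.condExp
            (MeasurableSpace.comap (fun ω => (U i ω, U j ω)) inferInstance) μ (Y1 i j)) ω)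
        =ᵐ[μ] (fun ω => P i j ω * MeasureTheory.condExp
          (MeasurableSpace.comap (P i j) inferInstance) μ (Y1 i j) ω) := by
      filter_upwards [condExp_condExp_of_le hmle h𝓂le (f := Y1 i j)] with ω hh
      rw [hh]
    exact ((c1.trans c2).trans c3).trans c4
  refine ⟨key, ?_⟩
  intro i i' hii'
  have hn1 : (0 : ℝ) < (n : ℝ) - 1 := by
    have h2n : (2 : ℝ) ≤ (n : ℝ) := by exact_mod_cast hn
    linarith
  have hmain : ∀ᵐ ω ∂μ, ∀ j : Fin n, j ≠ i → (dtil i i' ω ≤ b →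
      (MeasureTheory.condExp (MeasurableSpace.comap (P i' j) inferInstance) μ
          (fun ω' => A i' j ω' * Y i' j ω') ω
        - MeasureTheory.condExp (MeasurableSpace.comap (P i j) inferInstance) μ
            (fun ω' => A i j ω' * Y i j ω') ω) ^ 2
      ≤ 2 * (CY ^ 2 + CPhi ^ 2 * LY ^ 2) * (P i' j ω - P i j ω) ^ 2) := by
    rw [ae_all_iff]
    intro j
    by_cases hji : j = i
    · exact Filter.Eventually.of_forall fun ω h => absurd hji h
    · by_cases hji' : j = i'
      · subst hji'
        have hzero : (fun ω' => A j j ω' * Y j j ω') = fun _ => (0 : ℝ) := by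
          funext ω'; rw [hAdiag j ω', zero_mul]
        have hT1 : MeasureTheory.condExp (MeasurableSpace.comap (P j j) inferInstance) μ
            (fun ω' => A j j ω' * Y j j ω') = 0 := by
          rw [hzero]; exact condExp_zero
        have hEb : ∀ᵐ ω ∂μ, |MeasureTheory.condExp
            (MeasurableSpace.comap (P i j) inferInstance) μ (Y1 i j) ω| ≤ CY :=
          ae_bdd_condExp_of_ae_bdd (R := ⟨CY, hCY.le⟩)
            ((hYbdd i j (Ne.symm hji)).mono fun ω h => h.2)
        filter_upwards [key i j (Ne.symm hji), hEb, hoverlap i j (Ne.symm hji)]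
          with ω h2 hEω hPω
        intro _ _
        rw [hT1, h2, hPdiag j ω]
        have hE2 : (MeasureTheory.condExp (MeasurableSpace.comap (P i j) inferInstance) μ
            (Y1 i j) ω) ^ 2 ≤ CY ^ 2 := by
          have h5 := abs_le.mp hEω
          nlinarith [h5.1, h5.2]
        simp only [Pi.zero_apply]
        nlinarith [sq_nonneg (P i j ω), sq_nonneg (CPhi * LY),
          mul_le_mul_of_nonneg_left hE2 (sq_nonneg (P i j ω))]
      · have hEb' : ∀ᵐ ω ∂μ, |MeasureTheory.condExp
            (MeasurableSpace.comap (P i' j) inferInstance) μ (Y1 i' j) ω| ≤ CY :=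
          ae_bdd_condExp_of_ae_bdd (R := ⟨CY, hCY.le⟩)
            ((hYbdd i' j (Ne.symm hji')).mono fun ω h => h.2)
        filter_upwards [key i' j (Ne.symm hji'), key i j (Ne.symm hji), hEb',
          hoverlap i j (Ne.symm hji), hlip i i' hii'] with ω h1 h2 hE' hPov hlipω
        intro _ hdtil
        have hl := (hlipω hdtil j hji hji').1
        rw [h1, h2]
        set E' := MeasureTheory.condExp (MeasurableSpace.comap (P i' j) inferInstance) μ
          (Y1 i' j) ω with hE'def
        set E := MeasureTheory.condExp (MeasurableSpace.comap (P i j) inferInstance) μ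
          (Y1 i j) ω with hEdef
        have hE2 : E' ^ 2 ≤ CY ^ 2 := by
          have h5 := abs_le.mp hE'
          nlinarith [h5.1, h5.2]
        have hP2 : (P i j ω) ^ 2 ≤ CPhi ^ 2 := by nlinarith [hPov.1, hPov.2]
        have hEE : (E' - E) ^ 2 ≤ LY ^ 2 * (P i' j ω - P i j ω) ^ 2 := by
          calc (E' - E) ^ 2 = |E' - E| ^ 2 := (sq_abs _).symm
            _ ≤ (LY * |P i' j ω - P i j ω|) ^ 2 := pow_le_pow_left₀ (abs_nonneg _) hl 2
            _ = LY ^ 2 * (P i' j ω - P i j ω) ^ 2 := by rw [mul_pow, sq_abs]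
        nlinarith [sq_nonneg ((P i' j ω - P i j ω) * E' - P i j ω * (E' - E)),
          mul_le_mul_of_nonneg_left hE2 (sq_nonneg (P i' j ω - P i j ω)),
          mul_le_mul hP2 hEE (sq_nonneg _) (sq_nonneg CPhi)]
  filter_upwards [hmain] with ω hω
  intro hdtil
  refine le_trans (mul_le_mul_of_nonneg_left
    (Finset.sum_le_sum fun j hj => hω j (Finset.ne_of_mem_erase hj) hdtil)
    (div_nonneg zero_le_one hn1.le)) (le_of_eq ?_)
  rw [← Finset.mul_sum]
  ring
end
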